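/- arXiv:1411.5423 — 3 statements merged into one kernel-verified Lean document; each statement's English description precedes it below -/
import Mathlib

section
/- Let J : ℝⁿ → ℝ be continuous, nonnegative, symmetric, compactly supported, with ∫ J = J̄ > 0, and suppose J ≥ A > 0 on the ball B(0, r₁). Let w : ℝⁿ → ℝ be bounded below on a ball U₁ ⊂ B(z, r̄) of radius r₁/2 with ∫_{U₁} exp(w(y)) dy ≥ C₄ > 0, and let z_min be a point where w attains its minimum over the closure of U₁. If w(z_min) → -∞ along a sequence, then Φ(z_min) := ∫ J(y) exp(-y⋅p) exp(w(z_min - y) - w(z_min)) dy → +∞ along that sequence, for any fixed p ∈ ℝⁿ. -/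
open MeasureTheory Filter

/-!
Since `z_min` lies in the closure of `U₁ = B(c, r₁/2)`, every `y` with `z_min - y ∈ U₁` satisfies
`‖y‖ < r₁`, so there `J y exp(-y⋅p) ≥ A exp(-r₁‖p‖)`. Restricting the integral defining `Φ(z_min)` to
these `y` and substituting `x = z_min - y` gives
`Φ(z_min) ≥ A exp(-r₁‖p‖) exp(-w(z_min)) ∫_{U₁} exp w ≥ A exp(-r₁‖p‖) C₄ exp(-w(z_min))`,
which tends to `∞` as `w(z_min) → -∞`.
-/

open Metric Real

section Kernel

variable {E : Type*} [NormedAddCommGroup E]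

theorem mem_ball_zero_of_mem_closedBall_of_sub_mem_ball {a c y : E} {s t : ℝ}
    (ha : a ∈ closedBall c s) (hy : a - y ∈ ball c t) : y ∈ ball 0 (s + t) := by
  rw [mem_ball_zero_iff]
  calc ‖y‖ = dist a (a - y) := by simp
    _ ≤ dist a c + dist (a - y) c := dist_triangle_right _ _ _
    _ < s + t := add_lt_add_of_le_of_lt ha hy

variable [InnerProductSpace ℝ E]

theorem exp_neg_mul_norm_le_exp_neg_inner {y : E} {r : ℝ} (p : E) (hy : ‖y‖ ≤ r) :
    exp (-(r * ‖p‖)) ≤ exp (-inner ℝ y p) := by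
  gcongr
  exact (real_inner_le_norm y p).trans (mul_le_mul_of_nonneg_right hy (norm_nonneg p))

theorem mul_exp_le_kernel_mul_exp_sub {J : E → ℝ} {A r u v : ℝ} {y : E} (p : E) (hA : 0 ≤ A)
    (hJ : A ≤ J y) (hy : ‖y‖ ≤ r) :
    A * exp (-(r * ‖p‖)) * exp (-u) * exp v ≤ J y * exp (-inner ℝ y p) * exp (v - u) := by
  rw [sub_eq_neg_add, exp_add, ← mul_assoc]
  have hJ₀ : 0 ≤ J y := hA.trans hJ
  have hexp := exp_neg_mul_norm_le_exp_neg_inner p hy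
  gcongr

variable [MeasurableSpace E] [BorelSpace E] [SecondCountableTopology E]

theorem ofReal_mul_setLIntegral_exp_le_lintegral_kernel (μ : Measure E) [μ.IsAddLeftInvariant]
    [μ.IsNegInvariant] {J w : E → ℝ} {A r : ℝ} (hA : 0 ≤ A) (hJ : ∀ y ∈ ball 0 r, A ≤ J y)
    (p : E) {a c : E} (ha : a ∈ closedBall c (r / 2)) :
    ENNReal.ofReal (A * exp (-(r * ‖p‖)) * exp (-w a)) *
        ∫⁻ x in ball c (r / 2), ENNReal.ofReal (exp (w x)) ∂μ ≤
      ∫⁻ y, ENNReal.ofReal (J y * exp (-inner ℝ y p) * exp (w (a - y) - w a)) ∂μ := by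
  set S := (fun y => a - y) ⁻¹' ball c (r / 2)
  have hS : MeasurableSet S := measurableSet_ball.preimage (measurable_const.sub measurable_id)
  have hnorm : ∀ y ∈ S, ‖y‖ < r := fun y hy => by
    simpa using mem_ball_zero_of_mem_closedBall_of_sub_mem_ball ha hy
  calc ENNReal.ofReal (A * exp (-(r * ‖p‖)) * exp (-w a)) *
        ∫⁻ x in ball c (r / 2), ENNReal.ofReal (exp (w x)) ∂μ
      = ∫⁻ y in S, ENNReal.ofReal (A * exp (-(r * ‖p‖)) * exp (-w a)) *
          ENNReal.ofReal (exp (w (a - y))) ∂μ := by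
        rw [lintegral_const_mul' _ _ ENNReal.ofReal_ne_top,
          ← (Measure.measurePreserving_sub_left μ a).setLIntegral_comp_preimage_emb
            (MeasurableEquiv.subLeft a).measurableEmbedding]
    _ ≤ ∫⁻ y in S, ENNReal.ofReal (J y * exp (-inner ℝ y p) * exp (w (a - y) - w a)) ∂μ := by
        refine setLIntegral_mono' hS fun y hy => ?_
        rw [← ENNReal.ofReal_mul (by positivity)]
        exact ENNReal.ofReal_le_ofReal <|
          mul_exp_le_kernel_mul_exp_sub p hA (hJ y (by simpa using hnorm y hy)) (hnorm y hy).le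
    _ ≤ _ := setLIntegral_le_lintegral _ _

end Kernel

theorem tendsto_ofReal_mul_exp_neg_nhds_top {α : Type*} {l : Filter α} {u : α → ℝ} {κ : ℝ}
    (hκ : 0 < κ) (hu : Tendsto u l atBot) :
    Tendsto (fun k => ENNReal.ofReal (κ * exp (-u k))) l (nhds ⊤) :=
  ENNReal.tendsto_ofReal_atTop.comp <|
    (tendsto_exp_atTop.comp (tendsto_neg_atBot_atTop.comp hu)).const_mul_atTop hκ

theorem stmt_7_general (n : ℕ) (J : EuclideanSpace ℝ (Fin n) → ℝ)
    (r₁ A C₄ : ℝ) (hA : 0 < A) (hC₄ : 0 < C₄)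
    (hAbd : ∀ y ∈ Metric.ball (0 : EuclideanSpace ℝ (Fin n)) r₁, A ≤ J y)
    (p c : EuclideanSpace ℝ (Fin n))
    (U₁ : Set (EuclideanSpace ℝ (Fin n))) (hU₁ : U₁ = Metric.ball c (r₁ / 2))
    (w : ℕ → EuclideanSpace ℝ (Fin n) → ℝ)
    (hint : ∀ k, ∫⁻ y in U₁, ENNReal.ofReal (Real.exp (w k y)) ≥ ENNReal.ofReal C₄)
    (zmin : ℕ → EuclideanSpace ℝ (Fin n))
    (hzmin : ∀ k, zmin k ∈ closure U₁ ∧ ∀ y ∈ closure U₁, w k (zmin k) ≤ w k y)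
    (hblow : Tendsto (fun k => w k (zmin k)) atTop atBot) :
    Tendsto (fun k => ∫⁻ y, ENNReal.ofReal
        (J y * Real.exp (-(inner ℝ y p : ℝ)) *
          Real.exp (w k (zmin k - y) - w k (zmin k))))
      atTop (nhds ⊤) := by
  subst hU₁
  set κ := A * exp (-(r₁ * ‖p‖))
  have hlower : ∀ k, ENNReal.ofReal (κ * exp (-w k (zmin k))) * ENNReal.ofReal C₄ ≤
      ∫⁻ y, ENNReal.ofReal (J y * exp (-inner ℝ y p) *
        exp (w k (zmin k - y) - w k (zmin k))) := fun k =>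
    (mul_le_mul_right (hint k) _).trans <|
      ofReal_mul_setLIntegral_exp_le_lintegral_kernel volume hA.le hAbd p
        (closure_ball_subset_closedBall (hzmin k).1)
  refine tendsto_nhds_top_mono ?_ (Eventually.of_forall hlower)
  have hκC₄ := ENNReal.Tendsto.mul_const (b := ENNReal.ofReal C₄)
    (tendsto_ofReal_mul_exp_neg_nhds_top (κ := κ) (by positivity) hblow) (Or.inr ENNReal.ofReal_ne_top)
  rwa [ENNReal.top_mul (ENNReal.ofReal_pos.2 hC₄).ne'] at hκC₄

theorem stmt_7 (n : ℕ) (J : EuclideanSpace ℝ (Fin n) → ℝ)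
    (rbar r₁ A Jbar C₄ : ℝ) (hr₁ : 0 < r₁) (hA : 0 < A) (hC₄ : 0 < C₄)
    (hcont : Continuous J) (hnonneg : ∀ y, 0 ≤ J y) (hsymm : ∀ y, J y = J (-y))
    (hsupp : Function.support J ⊆ Metric.ball 0 rbar)
    (hJbar : ∫ y, J y = Jbar) (hJbarpos : 0 < Jbar)
    (hAbd : ∀ y ∈ Metric.ball (0 : EuclideanSpace ℝ (Fin n)) r₁, A ≤ J y)
    (p z c : EuclideanSpace ℝ (Fin n))
    (U₁ : Set (EuclideanSpace ℝ (Fin n))) (hU₁ : U₁ = Metric.ball c (r₁ / 2))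
    (hU₁sub : U₁ ⊆ Metric.ball z rbar)
    (w : ℕ → EuclideanSpace ℝ (Fin n) → ℝ) (hwcont : ∀ k, Continuous (w k))
    (hint : ∀ k, ∫⁻ y in U₁, ENNReal.ofReal (Real.exp (w k y)) ≥ ENNReal.ofReal C₄)
    (zmin : ℕ → EuclideanSpace ℝ (Fin n))
    (hzmin : ∀ k, zmin k ∈ closure U₁ ∧ ∀ y ∈ closure U₁, w k (zmin k) ≤ w k y)
    (hblow : Tendsto (fun k => w k (zmin k)) atTop atBot) :
    Tendsto (fun k => ∫⁻ y, ENNReal.ofReal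
        (J y * Real.exp (-(inner ℝ y p : ℝ)) *
          Real.exp (w k (zmin k - y) - w k (zmin k))))
      atTop (nhds ⊤) :=
  stmt_7_general n J r₁ A C₄ hA hC₄ hAbd p c U₁ hU₁ w hint zmin hzmin hblow
end

section
/- Suppose u, v : ℝⁿ → ℝ are measurable, v is such that z ↦ ∫ J(y) exp(-y⋅p) exp(v(z-y) - v(z)) dy is bounded above by a constant C uniformly in z, and there exist a point z₀ and γ > 0 with u(z) - u(z₀) ≤ v(z) - v(z₀) + γ for all z in the domain of integration. If additionally ∫ J(y) exp(-y⋅p) exp(u(z₀-y) - u(z₀)) dy ≥ ∫ J(y) exp(-y⋅p) exp(v(z₀-y) - v(z₀)) dy + ε₂ for some ε₂ > 0, then (exp(γ) - 1) · C ≥ ε₂; in particular, if γ < log(1 + ε₂/C), this is a contradiction. -/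
open MeasureTheory

/-
Since `u(z₀ - y) - u(z₀) ≤ v(z₀ - y) - v(z₀) + γ`, the `u`-integral at `z₀` is at most `e^γ` times the
`v`-integral `I`. Together with `I + ε₂ ≤ u`-integral this gives `ε₂ ≤ (e^γ - 1) I`, and `I ≤ C`.
-/

theorem lintegral_ofReal_mul_exp_le_of_le_add {α : Type*} [MeasurableSpace α] (μ : Measure α)
    {w a b : α → ℝ} {γ : ℝ} (hw : ∀ x, 0 ≤ w x) (hab : ∀ x, a x ≤ b x + γ) :
    ∫⁻ x, ENNReal.ofReal (w x * Real.exp (a x)) ∂μ ≤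
      ENNReal.ofReal (Real.exp γ) * ∫⁻ x, ENNReal.ofReal (w x * Real.exp (b x)) ∂μ := by
  rw [← lintegral_const_mul' _ _ ENNReal.ofReal_ne_top]
  refine lintegral_mono fun x => ?_
  rw [← ENNReal.ofReal_mul (Real.exp_pos γ).le]
  refine ENNReal.ofReal_le_ofReal ?_
  calc w x * Real.exp (a x) ≤ w x * Real.exp (b x + γ) := by gcongr; exacts [hw x, hab x]
    _ = Real.exp γ * (w x * Real.exp (b x)) := by rw [Real.exp_add]; ring

theorem ENNReal.le_sub_one_mul_of_add_le_mul {I ε c : ENNReal} (hI : I ≠ ⊤) (h : I + ε ≤ c * I) :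
    ε ≤ (c - 1) * I := by
  rw [ENNReal.sub_mul fun _ _ => hI, one_mul]
  exact ENNReal.le_sub_of_add_le_left hI h

theorem stmt_8_general (n : ℕ) (J : EuclideanSpace ℝ (Fin n) → ℝ)
    (hnonneg : ∀ y, 0 ≤ J y)
    (p z₀ : EuclideanSpace ℝ (Fin n)) (u v : EuclideanSpace ℝ (Fin n) → ℝ)
    (C γ ε₂ : ℝ) (hC : 0 ≤ C) (hε₂ : 0 < ε₂)
    (hbound : ∀ z, ∫⁻ y, ENNReal.ofReal
        (J y * Real.exp (-(inner ℝ y p : ℝ)) * Real.exp (v (z - y) - v z)) ≤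
      ENNReal.ofReal C)
    (hslope : ∀ z, u z - u z₀ ≤ v z - v z₀ + γ)
    (hsub : ∫⁻ y, ENNReal.ofReal
        (J y * Real.exp (-(inner ℝ y p : ℝ)) * Real.exp (u (z₀ - y) - u z₀)) ≥
      (∫⁻ y, ENNReal.ofReal
        (J y * Real.exp (-(inner ℝ y p : ℝ)) * Real.exp (v (z₀ - y) - v z₀))) +
        ENNReal.ofReal ε₂) :
    (Real.exp γ - 1) * C ≥ ε₂ := by
  set I := ∫⁻ y, ENNReal.ofReal
      (J y * Real.exp (-(inner ℝ y p : ℝ)) * Real.exp (v (z₀ - y) - v z₀))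
  have hIC : I ≤ ENNReal.ofReal C := hbound z₀
  have hcompare := lintegral_ofReal_mul_exp_le_of_le_add volume
    (w := fun y => J y * Real.exp (-(inner ℝ y p : ℝ)))
    (fun y => mul_nonneg (hnonneg y) (Real.exp_pos _).le) (fun y => hslope (z₀ - y))
  have hε : ENNReal.ofReal ε₂ ≤ (ENNReal.ofReal (Real.exp γ) - 1) * I :=
    ENNReal.le_sub_one_mul_of_add_le_mul (ne_top_of_le_ne_top ENNReal.ofReal_ne_top hIC)
      (hsub.trans hcompare)
  have hεC : ENNReal.ofReal ε₂ ≤ ENNReal.ofReal ((Real.exp γ - 1) * C) := by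
    rw [ENNReal.ofReal_mul' hC, ENNReal.ofReal_sub _ zero_le_one, ENNReal.ofReal_one]
    exact hε.trans (by gcongr)
  exact ((ENNReal.ofReal_le_ofReal_iff').1 hεC).resolve_right hε₂.not_ge

theorem stmt_8 (n : ℕ) (J : EuclideanSpace ℝ (Fin n) → ℝ)
    (hnonneg : ∀ y, 0 ≤ J y) (hint : Integrable J)
    (p z₀ : EuclideanSpace ℝ (Fin n)) (u v : EuclideanSpace ℝ (Fin n) → ℝ)
    (C γ ε₂ : ℝ) (hC : 0 ≤ C) (hγ : 0 < γ) (hε₂ : 0 < ε₂)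
    (hbound : ∀ z, ∫⁻ y, ENNReal.ofReal
        (J y * Real.exp (-(inner ℝ y p : ℝ)) * Real.exp (v (z - y) - v z)) ≤
      ENNReal.ofReal C)
    (hslope : ∀ z, u z - u z₀ ≤ v z - v z₀ + γ)
    (hsub : ∫⁻ y, ENNReal.ofReal
        (J y * Real.exp (-(inner ℝ y p : ℝ)) * Real.exp (u (z₀ - y) - u z₀)) ≥
      (∫⁻ y, ENNReal.ofReal
        (J y * Real.exp (-(inner ℝ y p : ℝ)) * Real.exp (v (z₀ - y) - v z₀))) +
        ENNReal.ofReal ε₂) :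
    (Real.exp γ - 1) * C ≥ ε₂ :=
  stmt_8_general n J hnonneg p z₀ u v C γ ε₂ hC hε₂ hbound hslope hsub
end

section
/- Let a₁ > 0 and define ũ : ℝⁿ → ℝ by ũ(z) = -a₁|z|. Suppose J is as in the paper's assumptions with J ≥ A > 0 on B(0, r₁), supported in B(0,1). Then for every z with |z| ≥ 1, the set A_z = { y ∈ B(z, 1) : |y| ≤ |z| - 1/2 } has Lebesgue measure bounded below by a positive constant c uniform in z, and consequently ∫_{B(0,1)} J(y) exp(a₁(|z| - |z - y|)) dy ≥ c·A·exp(a₁/2). -/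
/-!
Moving `z` a distance `3/4` towards the origin gives a centre `w` with `‖w‖ = ‖z‖ - 3/4`, and the
ball `B(w, 1/4)` lies in `A_z`, so `|A_z| ≥ |B(0, 1/4)|`. For the integral, restrict to the ball
`B(0, r)`, `r = min r₁ 1`: there `J ≥ A` and `‖z‖ - ‖z - y‖ ≥ -‖y‖ > -1`, so the integral is at
least `A e^{-a₁} |B(0, r)|`, and `c`, which may depend on `a₁`, absorbs the factor `e^{a₁/2}`.
-/

open MeasureTheory Metric

section

variable {E : Type*} [NormedAddCommGroup E] [NormedSpace ℝ E]

lemma norm_one_sub_div_norm_smul {z : E} {t : ℝ} (ht : 0 ≤ t) (hz : t ≤ ‖z‖) :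
    ‖(1 - t / ‖z‖) • z‖ = ‖z‖ - t := by
  rcases ht.eq_or_lt with rfl | ht
  · simp
  have hz0 : 0 < ‖z‖ := ht.trans_le hz
  rw [norm_smul, Real.norm_eq_abs, abs_of_nonneg]
  · field_simp
  · rw [sub_nonneg, div_le_one hz0]
    exact hz

lemma dist_one_sub_div_norm_smul_self {z : E} {t : ℝ} (ht : 0 ≤ t) (hz : z ≠ 0) :
    dist ((1 - t / ‖z‖) • z) z = t := by
  have hz0 : 0 < ‖z‖ := norm_pos_iff.mpr hz
  rw [dist_eq_norm, sub_smul, one_smul, sub_sub_cancel_left, norm_neg, norm_smul,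
    Real.norm_of_nonneg (by positivity)]
  field_simp

lemma ball_subset_ball_inter_norm_le {z : E} (hz : 3 / 4 ≤ ‖z‖) :
    ball ((1 - (3 / 4) / ‖z‖) • z) (1 / 4) ⊆ {y | y ∈ ball z 1 ∧ ‖y‖ ≤ ‖z‖ - 1 / 2} := by
  set w := (1 - (3 / 4) / ‖z‖) • z
  have hz0 : z ≠ 0 := norm_pos_iff.mp (lt_of_lt_of_le (by norm_num) hz)
  have hwz : dist w z = 3 / 4 := dist_one_sub_div_norm_smul_self (by norm_num) hz0
  have hw : ‖w‖ = ‖z‖ - 3 / 4 := norm_one_sub_div_norm_smul (by norm_num) hz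
  intro y hy
  rw [mem_ball] at hy
  refine ⟨?_, ?_⟩
  · rw [mem_ball]
    linarith [dist_triangle y w z]
  · linarith [norm_sub_norm_le y w, dist_eq_norm y w]

end

lemma le_lintegral_ball_exp_mul_norm_sub {E : Type*} [NormedAddCommGroup E] [MeasurableSpace E]
    [OpensMeasurableSpace E] (μ : Measure E) (J : E → ℝ) {A a r : ℝ} (hA : 0 ≤ A) (ha : 0 ≤ a)
    (hr : r ≤ 1) (hJ : ∀ y ∈ ball (0 : E) r, A ≤ J y) (z : E) :
    ENNReal.ofReal (A * Real.exp (-a)) * μ (ball 0 r) ≤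
      ∫⁻ y in ball (0 : E) 1, ENNReal.ofReal (J y * Real.exp (a * (‖z‖ - ‖z - y‖))) ∂μ := by
  have hpointwise : ∀ y ∈ ball (0 : E) r,
      ENNReal.ofReal (A * Real.exp (-a)) ≤
        ENNReal.ofReal (J y * Real.exp (a * (‖z‖ - ‖z - y‖))) := by
    intro y hy
    have hy1 : ‖y‖ < 1 := (mem_ball_zero_iff.mp hy).trans_le hr
    have hexp : Real.exp (-a) ≤ Real.exp (a * (‖z‖ - ‖z - y‖)) := by
      rw [Real.exp_le_exp]
      nlinarith [norm_sub_le z y]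
    exact ENNReal.ofReal_le_ofReal
      (mul_le_mul (hJ y hy) hexp (Real.exp_pos _).le (hA.trans (hJ y hy)))
  calc ENNReal.ofReal (A * Real.exp (-a)) * μ (ball 0 r)
      = ∫⁻ _ in ball (0 : E) r, ENNReal.ofReal (A * Real.exp (-a)) ∂μ :=
        (setLIntegral_const _ _).symm
    _ ≤ ∫⁻ y in ball (0 : E) r, ENNReal.ofReal (J y * Real.exp (a * (‖z‖ - ‖z - y‖))) ∂μ :=
        setLIntegral_mono' measurableSet_ball hpointwise
    _ ≤ _ := lintegral_mono_set (ball_subset_ball hr)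

theorem stmt_10_general (n : ℕ) (a₁ A r₁ : ℝ) (ha₁ : 0 < a₁)
    (hA : 0 < A) (hr₁ : 0 < r₁)
    (J : EuclideanSpace ℝ (Fin n) → ℝ)
    (hAbd : ∀ y ∈ Metric.ball (0 : EuclideanSpace ℝ (Fin n)) r₁, A ≤ J y) :
    ∃ c : ℝ, 0 < c ∧ ∀ z : EuclideanSpace ℝ (Fin n), 1 ≤ ‖z‖ →
      ENNReal.ofReal c ≤
        volume {y | y ∈ Metric.ball z 1 ∧ ‖y‖ ≤ ‖z‖ - 1/2} ∧
      ∫⁻ y in Metric.ball (0 : EuclideanSpace ℝ (Fin n)) 1,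
          ENNReal.ofReal (J y * Real.exp (a₁ * (‖z‖ - ‖z - y‖))) ≥
        ENNReal.ofReal (c * A * Real.exp (a₁ / 2)) := by
  set r := min r₁ 1
  set c₀ := (volume (ball (0 : EuclideanSpace ℝ (Fin n)) (1 / 4))).toReal
  set v := (volume (ball (0 : EuclideanSpace ℝ (Fin n)) r)).toReal
  have hc₀ : 0 < c₀ := ENNReal.toReal_pos (measure_ball_pos volume 0 (by norm_num)).ne'
    measure_ball_lt_top.ne
  have hv : 0 < v := ENNReal.toReal_pos (measure_ball_pos volume 0 (lt_min hr₁ one_pos)).ne'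
    measure_ball_lt_top.ne
  set c := min c₀ (v * Real.exp (-a₁) / Real.exp (a₁ / 2))
  have hc_exp : c * Real.exp (a₁ / 2) ≤ v * Real.exp (-a₁) :=
    (le_div_iff₀ (Real.exp_pos _)).mp (min_le_right _ _)
  refine ⟨c, by positivity, fun z hz => ⟨?_, ?_⟩⟩
  · calc ENNReal.ofReal c ≤ ENNReal.ofReal c₀ := ENNReal.ofReal_le_ofReal (min_le_left _ _)
      _ = volume (ball ((1 - (3 / 4) / ‖z‖) • z) (1 / 4)) := by
        rw [ENNReal.ofReal_toReal measure_ball_lt_top.ne]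
        exact (Measure.addHaar_ball_center _ _ _).symm
      _ ≤ _ := measure_mono (ball_subset_ball_inter_norm_le (by linarith))
  · calc ENNReal.ofReal (c * A * Real.exp (a₁ / 2))
        ≤ ENNReal.ofReal (A * Real.exp (-a₁) * v) := ENNReal.ofReal_le_ofReal (by nlinarith)
      _ = ENNReal.ofReal (A * Real.exp (-a₁)) * volume (ball (0 : EuclideanSpace ℝ (Fin n)) r) := by
        rw [ENNReal.ofReal_mul (by positivity), ENNReal.ofReal_toReal measure_ball_lt_top.ne]
      _ ≤ _ := le_lintegral_ball_exp_mul_norm_sub volume J hA.le ha₁.le (min_le_right _ _)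
        (fun y hy => hAbd y (ball_subset_ball (min_le_left _ _) hy)) z

theorem stmt_10 (n : ℕ) (hn : 1 ≤ n) (a₁ A r₁ : ℝ) (ha₁ : 0 < a₁)
    (hA : 0 < A) (hr₁ : 0 < r₁)
    (J : EuclideanSpace ℝ (Fin n) → ℝ) (hcont : Continuous J)
    (hnonneg : ∀ y, 0 ≤ J y)
    (hsupp : Function.support J ⊆ Metric.ball 0 1)
    (hAbd : ∀ y ∈ Metric.ball (0 : EuclideanSpace ℝ (Fin n)) r₁, A ≤ J y) :
    ∃ c : ℝ, 0 < c ∧ ∀ z : EuclideanSpace ℝ (Fin n), 1 ≤ ‖z‖ →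
      ENNReal.ofReal c ≤
        volume {y | y ∈ Metric.ball z 1 ∧ ‖y‖ ≤ ‖z‖ - 1/2} ∧
      ∫⁻ y in Metric.ball (0 : EuclideanSpace ℝ (Fin n)) 1,
          ENNReal.ofReal (J y * Real.exp (a₁ * (‖z‖ - ‖z - y‖))) ≥
        ENNReal.ofReal (c * A * Real.exp (a₁ / 2)) :=
  stmt_10_general n a₁ A r₁ ha₁ hA hr₁ J hAbd
end
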